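/- arXiv:cs/0507013 — 2 statements merged into one kernel-verified Lean document; each statement's English description precedes it below -/
import Mathlib

section
/- Let S and T be finite sets of real numbers with S ∩ T = ∅ and |S| > |T| ≥ 1. Let R ⊆ S have elements r_1 < r_2 < … < r_{|S|−|T|} such that H(r_k) = k and r_k maximizes the profit P(s) among all points s ∈ S with H(s) = k, for every k. Then R minimizes the quantity Σ_{r ∈ R'} |r − N(r)| + ∫_{−∞}^{+∞} |H_{R'}(x)| dx over all subsets R' ⊆ S with |R'| = |S| − |T| whose k-th smallest element has height k for every k. -/
open Finset MeasureTheory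

/-- The height function `H(x) = |{s ∈ S : s ≤ x}| − |{t ∈ T : t ≤ x}|`. -/
noncomputable def heightFn (S T : Finset ℝ) (x : ℝ) : ℤ :=
  ((S.filter (fun s => s ≤ x)).card : ℤ) - ((T.filter (fun t => t ≤ x)).card : ℤ)

/-- The relative height `h^k(x)`: `1` if `H(x) ≥ k` and `−1` otherwise. -/
noncomputable def relHeight (S T : Finset ℝ) (k : ℤ) (x : ℝ) : ℝ :=
  if k ≤ heightFn S T x then 1 else -1

/-- `N` assigns to each point of `S` a nearest neighbor in `T`. -/
def IsNearestNeighbor (S T : Finset ℝ) (N : ℝ → ℝ) : Prop :=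
  ∀ s ∈ S, N s ∈ T ∧ ∀ t ∈ T, |s - N s| ≤ |s - t|

/-- The profit `P(s) = ∫_s^m h^{H(s)}(x) dx − |s − N(s)|`, where `m` is the largest
point of `S ∪ T`. -/
noncomputable def profit (S T : Finset ℝ) (N : ℝ → ℝ) (m s : ℝ) : ℝ :=
  (∫ x in s..m, relHeight S T (heightFn S T s) x) - |s - N s|

/-- `R` has `|S| − |T|` elements and its `k`-th smallest element has height `k`. -/
def HeightCond (S T R : Finset ℝ) : Prop :=
  ∃ h : R.card = S.card - T.card,
    ∀ k : Fin (S.card - T.card), heightFn S T (R.orderEmbOfFin h k) = (k : ℤ) + 1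

/-- The quantity `Σ_{r ∈ R} |r − N(r)| + ∫ |H_R(x)| dx`. -/
noncomputable def removeCost (S T R : Finset ℝ) (N : ℝ → ℝ) : ℝ :=
  (∑ r ∈ R, |r - N r|) + ∫ x : ℝ, |(heightFn (S \ R) T x : ℝ)|

lemma countFn_measurable (A : Finset ℝ) :
    Measurable fun x => ((A.filter (fun s => s ≤ x)).card : ℝ) := by
  have : (fun x => ((A.filter (fun s => s ≤ x)).card : ℝ))
      = fun x => ∑ s ∈ A, (if s ≤ x then (1:ℝ) else 0) := by
    funext x
    rw [Finset.card_filter]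
    push_cast
    rfl
  rw [this]
  exact Finset.measurable_sum _ fun s _ =>
    Measurable.ite measurableSet_Ici measurable_const measurable_const

lemma heightFn_measurable (S T : Finset ℝ) :
    Measurable fun x => ((heightFn S T x : ℤ) : ℝ) := by
  have : (fun x => ((heightFn S T x : ℤ) : ℝ)) =
      fun x => ((S.filter (fun s => s ≤ x)).card : ℝ) - ((T.filter (fun t => t ≤ x)).card : ℝ) := by
    funext x; simp [heightFn]
  rw [this]
  exact (countFn_measurable S).sub (countFn_measurable T)

lemma relHeight_measurable (S T : Finset ℝ) (k : ℤ) :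
    Measurable (relHeight S T k) := by
  have hset : MeasurableSet {x : ℝ | k ≤ heightFn S T x} := by
    have : {x : ℝ | k ≤ heightFn S T x}
        = (fun x => ((heightFn S T x : ℤ) : ℝ)) ⁻¹' (Set.Ici (k : ℝ)) := by
      ext x; simp [Int.cast_le]
    rw [this]
    exact (heightFn_measurable S T) measurableSet_Ici
  exact Measurable.ite hset measurable_const measurable_const

lemma sum_pm (c : ℕ) (H : ℤ) :
    ∑ k ∈ Finset.range c, (if (k : ℤ) + 1 ≤ H then (1:ℝ) else -1)
      = |(H : ℝ)| - |(H : ℝ) - c| := by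
  induction c with
  | zero => simp
  | succ n ih =>
    rw [Finset.sum_range_succ, ih]
    have h1 : ∀ a : ℤ, |(a : ℝ)| = ((|a| : ℤ) : ℝ) := fun a => by push_cast; rfl
    have h2 : ((n:ℝ) + 1) = (((n:ℤ) + 1 : ℤ) : ℝ) := by push_cast; ring
    push_cast
    rw [show (H:ℝ) - ((n:ℝ)+1) = (((H - ((n:ℤ)+1) : ℤ)):ℝ) by push_cast; ring,
        show (H:ℝ) - (n:ℝ) = (((H - n : ℤ)):ℝ) by push_cast; ring]
    simp only [h1]
    split <;> rename_i h
    · rw [show |H - ((n:ℤ)+1)| = |H - (n:ℤ)| - 1 by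
        rw [abs_of_nonneg (by omega), abs_of_nonneg (by omega)]; ring]
      push_cast; ring
    · rw [show |H - ((n:ℤ)+1)| = |H - (n:ℤ)| + 1 by
        rw [abs_of_nonpos (by omega), abs_of_nonpos (by omega)]; ring]
      push_cast; ring

lemma fin_filter_le_card {n : ℕ} (k : Fin n) :
    (Finset.univ.filter (fun i : Fin n => i ≤ k)).card = (k : ℕ) + 1 := by
  rw [Finset.card_filter]
  simp only [Fin.le_def]
  rw [Fin.sum_univ_eq_sum_range (fun i => if i ≤ (k:ℕ) then 1 else 0)]
  rw [← Finset.card_filter]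
  rw [show (Finset.range n).filter (fun i => i ≤ (k:ℕ)) = Finset.range ((k:ℕ)+1) from ?_]
  · exact Finset.card_range _
  · ext i
    simp only [Finset.mem_filter, Finset.mem_range]
    have := k.isLt
    omega

lemma fin_filter_lt_card {n : ℕ} (k : Fin n) :
    (Finset.univ.filter (fun i : Fin n => i < k)).card = (k : ℕ) := by
  rw [Finset.card_filter]
  simp only [Fin.lt_def]
  rw [Fin.sum_univ_eq_sum_range (fun i => if i < (k:ℕ) then 1 else 0)]
  rw [← Finset.card_filter]
  rw [show (Finset.range n).filter (fun i => i < (k:ℕ)) = Finset.range (k:ℕ) from ?_]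
  · exact Finset.card_range _
  · ext i
    simp only [Finset.mem_filter, Finset.mem_range]
    have := k.isLt
    omega

lemma downclosed_mem_iff {n : ℕ} (A : Finset (Fin n))
    (hdc : ∀ i j : Fin n, i ≤ j → j ∈ A → i ∈ A) (k : Fin n) :
    k ∈ A ↔ (k : ℕ) < A.card := by
  constructor
  · intro hk
    have hsub : (Finset.univ.filter (fun i : Fin n => i ≤ k)) ⊆ A := by
      intro i hi
      simp only [Finset.mem_filter, Finset.mem_univ, true_and] at hi
      exact hdc i k hi hk
    have := Finset.card_le_card hsub
    rw [fin_filter_le_card] at this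
    omega
  · intro hk
    by_contra hnk
    have hsub : A ⊆ Finset.univ.filter (fun i : Fin n => i < k) := by
      intro i hi
      simp only [Finset.mem_filter, Finset.mem_univ, true_and]
      by_contra hik
      exact hnk (hdc k i (le_of_not_gt hik) hi)
    have := Finset.card_le_card hsub
    rw [fin_filter_lt_card] at this
    omega

lemma pointwise_identity (S T R' : Finset ℝ) (hR' : R' ⊆ S) {d : ℕ}
    (hc : R'.card = d) (x : ℝ) :
    |((heightFn (S \ R') T x : ℤ) : ℝ)|
      = |((heightFn S T x : ℤ) : ℝ)|
        - ∑ k : Fin d, (if R'.orderEmbOfFin hc k ≤ x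
            then relHeight S T ((k:ℤ)+1) x else 0) := by
  set H := heightFn S T x with hH
  set c := (R'.filter (fun r => r ≤ x)).card with hcdef
  have hfil : (S \ R').filter (fun s => s ≤ x)
      = (S.filter (fun s => s ≤ x)) \ (R'.filter (fun s => s ≤ x)) := by
    ext y; simp only [Finset.mem_filter, Finset.mem_sdiff]; tauto
  have hsubf : R'.filter (fun s => s ≤ x) ⊆ S.filter (fun s => s ≤ x) :=
    Finset.filter_subset_filter _ hR'
  have hle := Finset.card_le_card hsubf
  have h1 : heightFn (S \ R') T x = H - c := by
    rw [hH]; unfold heightFn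
    rw [hfil, Finset.card_sdiff_of_subset hsubf, ← hcdef]
    push_cast [show c ≤ _ from hle]
    ring
  have hmemiff : ∀ k : Fin d, (R'.orderEmbOfFin hc k ≤ x ↔ (k:ℕ) < c) := by
    intro k
    set A := Finset.univ.filter (fun j : Fin d => R'.orderEmbOfFin hc j ≤ x) with hA
    have hcardA : A.card = c := by
      apply Finset.card_bij (fun j _ => R'.orderEmbOfFin hc j)
      · intro j hj
        simp only [hA, Finset.mem_filter, Finset.mem_univ, true_and] at hj
        exact Finset.mem_filter.mpr ⟨Finset.orderEmbOfFin_mem _ _ _, hj⟩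
      · intro j1 _ j2 _ hj
        exact (R'.orderEmbOfFin hc).injective hj
      · intro r hr
        obtain ⟨hrR, hrx⟩ := Finset.mem_filter.mp hr
        obtain ⟨j, hj⟩ : ∃ j, R'.orderEmbOfFin hc j = r := by
          have := Finset.range_orderEmbOfFin R' hc
          have : r ∈ Set.range (R'.orderEmbOfFin hc) := by rw [this]; exact_mod_cast hrR
          exact this
        exact ⟨j, by simp [hA, hj, hrx], hj⟩
    have hdc : ∀ i j : Fin d, i ≤ j → j ∈ A → i ∈ A := by
      intro i j hij hj
      simp only [hA, Finset.mem_filter, Finset.mem_univ, true_and] at hj ⊢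
      exact le_trans ((R'.orderEmbOfFin hc).monotone hij) hj
    have h := downclosed_mem_iff A hdc k
    rw [hcardA] at h
    rw [← h]
    simp [hA]
  have hcd : c ≤ d := hc ▸ Finset.card_le_card (Finset.filter_subset _ _)
  have hsum : ∑ k : Fin d, (if R'.orderEmbOfFin hc k ≤ x
      then relHeight S T ((k:ℤ)+1) x else 0)
      = |(H : ℝ)| - |(H : ℝ) - c| := by
    have e1 : ∀ k : Fin d, (if R'.orderEmbOfFin hc k ≤ x
        then relHeight S T ((k:ℤ)+1) x else 0)
        = (if (k:ℕ) < c then (if ((k:ℕ):ℤ)+1 ≤ H then (1:ℝ) else -1) else 0) := by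
      intro k
      rw [relHeight]
      simp only [hmemiff k, ← hH]
    rw [Finset.sum_congr rfl (fun k _ => e1 k)]
    rw [Fin.sum_univ_eq_sum_range (fun k => if k < c then (if (k:ℤ)+1 ≤ H then (1:ℝ) else -1) else 0)]
    rw [← Finset.sum_filter]
    rw [show (Finset.range d).filter (fun k => k < c) = Finset.range c from by
      ext i; simp only [Finset.mem_filter, Finset.mem_range]; omega]
    exact sum_pm c H
  rw [hsum, h1]
  push_cast
  ring

lemma intervalIntegrable_of_bounded {f : ℝ → ℝ} (hf : Measurable f) (C : ℝ)
    (h : ∀ x, |f x| ≤ C) (a b : ℝ) : IntervalIntegrable f volume a b := by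
  rw [intervalIntegrable_iff]
  apply Integrable.mono' (g := fun _ => C) _ hf.aestronglyMeasurable.restrict
    (Filter.Eventually.of_forall fun x => by simpa using h x)
  exact integrableOn_const measure_Ioc_lt_top.ne

lemma abs_heightFn_le (A B : Finset ℝ) (x : ℝ) :
    |((heightFn A B x : ℤ) : ℝ)| ≤ (A.card : ℝ) + B.card := by
  have h1 : ((A.filter (fun s => s ≤ x)).card : ℝ) ≤ A.card := by
    exact_mod_cast Finset.card_le_card (Finset.filter_subset _ _)
  have h2 : ((B.filter (fun s => s ≤ x)).card : ℝ) ≤ B.card := by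
    exact_mod_cast Finset.card_le_card (Finset.filter_subset _ _)
  rw [heightFn]
  push_cast
  rw [abs_sub_le_iff]
  have h3 : (0:ℝ) ≤ ((A.filter (fun s => s ≤ x)).card : ℝ) := Nat.cast_nonneg _
  have h4 : (0:ℝ) ≤ ((B.filter (fun t => t ≤ x)).card : ℝ) := Nat.cast_nonneg _
  constructor <;> linarith

lemma removeCost_eq (S T : Finset ℝ) (hST : T.card < S.card)
    (hne : (S ∪ T).Nonempty) (N : ℝ → ℝ)
    (R' : Finset ℝ) (hR' : R' ⊆ S) (hc : R'.card = S.card - T.card)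
    (hh : ∀ k : Fin (S.card - T.card),
      heightFn S T (R'.orderEmbOfFin hc k) = (k : ℤ) + 1) :
    removeCost S T R' N
      = (∫ x in ((S ∪ T).min' hne)..((S ∪ T).max' hne), |((heightFn S T x : ℤ) : ℝ)|)
        - ∑ k : Fin (S.card - T.card),
            profit S T N ((S ∪ T).max' hne) (R'.orderEmbOfFin hc k) := by
  set μ := (S ∪ T).min' hne with hμ
  set m := (S ∪ T).max' hne with hm
  have hbounds : ∀ r ∈ S ∪ T, μ ≤ r ∧ r ≤ m :=
    fun r hr => ⟨Finset.min'_le _ _ hr, Finset.le_max' _ _ hr⟩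
  have hμm : μ ≤ m := by
    obtain ⟨y, hy⟩ := hne
    exact le_trans (hbounds y hy).1 (hbounds y hy).2
  have hek : ∀ k : Fin (S.card - T.card), μ ≤ R'.orderEmbOfFin hc k ∧ R'.orderEmbOfFin hc k ≤ m := by
    intro k
    exact hbounds _ (Finset.mem_union_left _ (hR' (Finset.orderEmbOfFin_mem _ _ _)))
  -- step: zero outside Icc
  have hzero : ∀ x ∉ Set.Icc μ m, |((heightFn (S \ R') T x : ℤ) : ℝ)| = 0 := by
    intro x hx
    rw [Set.mem_Icc, not_and_or] at hx
    have hz : heightFn (S \ R') T x = 0 := by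
      rcases hx with hx | hx
      · push_neg at hx
        rw [heightFn, Finset.filter_false_of_mem, Finset.filter_false_of_mem]
        · simp
        · intro t ht
          exact not_le.mpr (lt_of_lt_of_le hx (hbounds t (Finset.mem_union_right _ ht)).1)
        · intro s hs
          exact not_le.mpr (lt_of_lt_of_le hx
            (hbounds s (Finset.mem_union_left _ (Finset.sdiff_subset hs))).1)
      · push_neg at hx
        rw [heightFn, Finset.filter_true_of_mem, Finset.filter_true_of_mem,
          Finset.card_sdiff_of_subset hR']
        · have h1 : R'.card ≤ S.card := Finset.card_le_card hR'
          rw [hc]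
          have : S.card - (S.card - T.card) = T.card := by omega
          rw [this]; ring
        · intro t ht
          exact le_of_lt (lt_of_le_of_lt (hbounds t (Finset.mem_union_right _ ht)).2 hx)
        · intro s hs
          exact le_of_lt (lt_of_le_of_lt
            (hbounds s (Finset.mem_union_left _ (Finset.sdiff_subset hs))).2 hx)
    rw [hz]; simp
  -- step: whole-line integral to interval integral
  have hint : (∫ x : ℝ, |((heightFn (S \ R') T x : ℤ) : ℝ)|)
      = ∫ x in μ..m, |((heightFn (S \ R') T x : ℤ) : ℝ)| := by
    rw [intervalIntegral.integral_of_le hμm, ← integral_Icc_eq_integral_Ioc,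
      setIntegral_eq_integral_of_forall_compl_eq_zero hzero]
  -- integrability facts
  have hintH : IntervalIntegrable (fun x => |((heightFn S T x : ℤ) : ℝ)|) volume μ m :=
    intervalIntegrable_of_bounded (heightFn_measurable S T).abs ((S.card : ℝ) + T.card)
      (fun x => by rw [abs_abs]; exact abs_heightFn_le S T x) μ m
  have hintg : ∀ k : Fin (S.card - T.card), IntervalIntegrable
      (fun x => if R'.orderEmbOfFin hc k ≤ x then relHeight S T ((k:ℤ)+1) x else 0)
      volume μ m := by
    intro k
    apply intervalIntegrable_of_bounded
      (Measurable.ite measurableSet_Ici (relHeight_measurable S T _) measurable_const) 1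
    intro x
    rw [relHeight]
    split
    · split <;> norm_num
    · norm_num
  -- step: each g_k integrates to the tail integral
  have htail : ∀ k : Fin (S.card - T.card),
      (∫ x in μ..m, if R'.orderEmbOfFin hc k ≤ x then relHeight S T ((k:ℤ)+1) x else 0)
        = ∫ x in (R'.orderEmbOfFin hc k)..m, relHeight S T ((k:ℤ)+1) x := by
    intro k
    set e := R'.orderEmbOfFin hc k with he
    have h1 : IntervalIntegrable
        (fun x => if e ≤ x then relHeight S T ((k:ℤ)+1) x else 0) volume μ e := by
      apply (hintg k).mono_set
      rw [Set.uIcc_of_le (hek k).1, Set.uIcc_of_le hμm]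
      exact Set.Icc_subset_Icc le_rfl (hek k).2
    have h2 : IntervalIntegrable
        (fun x => if e ≤ x then relHeight S T ((k:ℤ)+1) x else 0) volume e m := by
      apply (hintg k).mono_set
      rw [Set.uIcc_of_le (hek k).2, Set.uIcc_of_le hμm]
      exact Set.Icc_subset_Icc (hek k).1 le_rfl
    rw [← intervalIntegral.integral_add_adjacent_intervals h1 h2]
    have hfirst : (∫ x in μ..e, if e ≤ x then relHeight S T ((k:ℤ)+1) x else 0) = 0 := by
      rw [intervalIntegral.integral_of_le (hek k).1]
      apply integral_eq_zero_of_ae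
      have hae : ∀ᵐ x : ℝ ∂volume, x ≠ e := by
        rw [MeasureTheory.ae_iff]
        have : {x : ℝ | ¬ x ≠ e} = {e} := by ext y; simp
        rw [this]
        exact measure_singleton e
      filter_upwards [ae_restrict_of_ae hae, ae_restrict_mem measurableSet_Ioc] with x hx1 hx2
      simp only [Pi.zero_apply]
      rw [if_neg (not_le.mpr (lt_of_le_of_ne hx2.2 hx1))]
    have hsecond : (∫ x in e..m, if e ≤ x then relHeight S T ((k:ℤ)+1) x else 0)
        = ∫ x in e..m, relHeight S T ((k:ℤ)+1) x := by
      apply intervalIntegral.integral_congr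
      intro x hx
      rw [Set.uIcc_of_le (hek k).2] at hx
      exact if_pos hx.1
    rw [hfirst, hsecond, zero_add]
  -- step: sum over R' as sum over Fin (S.card - T.card)
  have hsumR : ∀ f : ℝ → ℝ, ∑ r ∈ R', f r = ∑ k : Fin (S.card - T.card), f (R'.orderEmbOfFin hc k) := by
    intro f
    rw [eq_comm]
    apply Finset.sum_bij (fun k _ => R'.orderEmbOfFin hc k)
    · intro k _; exact Finset.orderEmbOfFin_mem _ _ _
    · intro j1 _ j2 _ hj; exact (R'.orderEmbOfFin hc).injective hj
    · intro r hr
      obtain ⟨j, hj⟩ : ∃ j, R'.orderEmbOfFin hc j = r := by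
        have h := Finset.range_orderEmbOfFin R' hc
        have : r ∈ Set.range (R'.orderEmbOfFin hc) := by rw [h]; exact_mod_cast hr
        exact this
      exact ⟨j, Finset.mem_univ _, hj⟩
    · intro k _; rfl
  have hprofsum : ∑ k : Fin (S.card - T.card), profit S T N m (R'.orderEmbOfFin hc k)
      = (∑ k : Fin (S.card - T.card), ∫ x in μ..m,
          (if R'.orderEmbOfFin hc k ≤ x then relHeight S T ((k:ℤ)+1) x else 0))
        - ∑ k : Fin (S.card - T.card), |R'.orderEmbOfFin hc k - N (R'.orderEmbOfFin hc k)| := by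
    rw [← Finset.sum_sub_distrib]
    apply Finset.sum_congr rfl
    intro k _
    rw [profit, hh k, htail k]
  have hptw : (∫ x in μ..m, |((heightFn (S \ R') T x : ℤ) : ℝ)|)
      = (∫ x in μ..m, |((heightFn S T x : ℤ) : ℝ)|)
        - ∑ k : Fin (S.card - T.card), ∫ x in μ..m,
            (if R'.orderEmbOfFin hc k ≤ x then relHeight S T ((k:ℤ)+1) x else 0) := by
    have heq : (fun x => ∑ k : Fin (S.card - T.card),
        (if R'.orderEmbOfFin hc k ≤ x then relHeight S T ((k:ℤ)+1) x else 0))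
        = ∑ k ∈ Finset.univ, (fun x => if R'.orderEmbOfFin hc k ≤ x
            then relHeight S T ((k:ℤ)+1) x else 0) := by
      funext x
      rw [Finset.sum_apply]
    have hsum_int : IntervalIntegrable (fun x => ∑ k : Fin (S.card - T.card),
        (if R'.orderEmbOfFin hc k ≤ x then relHeight S T ((k:ℤ)+1) x else 0)) volume μ m := by
      rw [heq]
      exact IntervalIntegrable.sum _ (fun k _ => hintg k)
    rw [← intervalIntegral.integral_finset_sum (fun k _ => hintg k),
      ← intervalIntegral.integral_sub hintH hsum_int]
    apply intervalIntegral.integral_congr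
    intro x _
    exact pointwise_identity S T R' hR' hc x
  rw [removeCost, hint, hptw, hsumR (fun r => |r - N r|), hprofsum]
  ring

/-- if the `k`-th smallest element `r_k` of `R` has height `k` and
maximizes the profit among all points of `S` of height `k`, then `R` minimizes
`Σ_{r ∈ R'} |r − N(r)| + ∫ |H_{R'}(x)| dx` over all subsets `R' ⊆ S` of size
`|S| − |T|` whose `k`-th smallest element has height `k` for every `k`. -/
theorem profit_maximizers_minimize_removeCost (S T : Finset ℝ)
    (hdisj : Disjoint S T) (hST : T.card < S.card) (hT : 1 ≤ T.card)
    (hne : (S ∪ T).Nonempty)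
    (N : ℝ → ℝ) (hN : IsNearestNeighbor S T N)
    (R : Finset ℝ) (hR : R ⊆ S) (hcard : R.card = S.card - T.card)
    (hheight : ∀ k : Fin (S.card - T.card),
      heightFn S T (R.orderEmbOfFin hcard k) = (k : ℤ) + 1)
    (hmax : ∀ k : Fin (S.card - T.card), ∀ s ∈ S,
      heightFn S T s = (k : ℤ) + 1 →
        profit S T N ((S ∪ T).max' hne) s ≤
          profit S T N ((S ∪ T).max' hne) (R.orderEmbOfFin hcard k)) :
    ∀ R' : Finset ℝ, R' ⊆ S → R'.card = S.card - T.card → HeightCond S T R' →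
      removeCost S T R N ≤ removeCost S T R' N := by
  intro R' hR'sub hcard' hcond
  obtain ⟨h', hh'⟩ := hcond
  rw [removeCost_eq S T hST hne N R hR hcard hheight,
    removeCost_eq S T hST hne N R' hR'sub h' hh']
  apply sub_le_sub_left
  apply Finset.sum_le_sum
  intro k _
  exact hmax k _ (hR'sub (Finset.orderEmbOfFin_mem _ _ _)) (hh' k)
end

section
/- Let S and T be finite sets of real numbers with S ∩ T = ∅ and |S| > |T| ≥ 1. If r, s ∈ S satisfy r < s and H(r) = H(s) = k for some integer k, then P(r) = P(s) + ∫_{r}^{s} h^{k}(x) dx − |r − N(r)| + |s − N(s)|. -/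
open Finset MeasureTheory

lemma measurable_heightFn (S T : Finset ℝ) : Measurable (heightFn S T) := by
  have h : ∀ (U : Finset ℝ), Measurable (fun x => ((U.filter (fun u => u ≤ x)).card : ℤ)) := by
    intro U
    have : (fun x => ((U.filter (fun u => u ≤ x)).card : ℤ)) =
        fun x => ∑ u ∈ U, if u ≤ x then (1:ℤ) else 0 := by
      funext x; rw [Finset.card_filter]; push_cast; rfl
    rw [this]
    exact Finset.measurable_sum _ (fun u _ =>
      Measurable.ite (measurableSet_Ici (a := u)) measurable_const measurable_const)
  exact (h S).sub (h T)

lemma intervalIntegrable_relHeight (S T : Finset ℝ) (k : ℤ) (a b : ℝ) :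
    IntervalIntegrable (relHeight S T k) volume a b := by
  have hm : Measurable (relHeight S T k) := by
    apply Measurable.ite _ measurable_const measurable_const
    exact (measurable_heightFn S T) (MeasurableSet.of_discrete (s := Set.Ici k))
  apply IntervalIntegrable.mono_fun' (g := fun _ => (1:ℝ))
    intervalIntegrable_const hm.aestronglyMeasurable
  filter_upwards with x
  simp only [relHeight]; split <;> simp

/-- if `r, s ∈ S` with `r < s` have the same height `k`, then
`P(r) = P(s) + ∫_r^s h^k(x) dx − |r − N(r)| + |s − N(s)|`. -/
theorem profit_split (S T : Finset ℝ)
    (hdisj : Disjoint S T) (hST : T.card < S.card) (hT : 1 ≤ T.card)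
    (hne : (S ∪ T).Nonempty)
    (N : ℝ → ℝ) (hN : IsNearestNeighbor S T N)
    (r s : ℝ) (hrS : r ∈ S) (hsS : s ∈ S) (hrs : r < s)
    (k : ℤ) (hr : heightFn S T r = k) (hs : heightFn S T s = k) :
    profit S T N ((S ∪ T).max' hne) r =
      profit S T N ((S ∪ T).max' hne) s + (∫ x in r..s, relHeight S T k x) -
        |r - N r| + |s - N s| := by
  have key := intervalIntegral.integral_add_adjacent_intervals
    (intervalIntegrable_relHeight S T k r s)
    (intervalIntegrable_relHeight S T k s ((S ∪ T).max' hne))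
  simp only [profit, hr, hs]
  linarith [key]
end
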